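/- Let G and H be simple graphs on n vertices. Then H can be obtained from G by a finite sequence of vertex flippings if and only if there is a bijection φ from the vertex set of G to the vertex set of H such that for all distinct vertices u, v, w of G, the triple {u, v, w} is a frustrated triangle of G if and only if {φ(u), φ(v), φ(w)} is a frustrated triangle of H. -/

import Mathlib

open Finset

open Classical in
/-- A triple of distinct vertices is *frustrated* if it induces an odd number of edges. -/
noncomputable def frustrated {V : Type*} (G : SimpleGraph V) (u v w : V) : Prop :=
  Odd ((if G.Adj u v then 1 else 0) + (if G.Adj u w then 1 else 0) +
       (if G.Adj v w then 1 else 0) : ℕ)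

/-- The number of frustrated triangles of `G`: the number of 3-element vertex subsets
inducing an odd number of edges. -/
noncomputable def fCount {V : Type*} [Fintype V] [DecidableEq V] (G : SimpleGraph V) : ℕ := by
  classical
  exact ((Finset.univ.powersetCard 3).filter
    (fun s : Finset V => ∃ u v w : V, u ≠ v ∧ u ≠ w ∧ v ≠ w ∧ s = {u, v, w} ∧
      frustrated G u v w)).card

/-- The graph obtained from `G` by flipping the vertex `v`, i.e. toggling the
edge/nonedge status of every pair `{u, v}` with `u ≠ v`. -/
def flipVertex {V : Type*} (G : SimpleGraph V) (v : V) : SimpleGraph V where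
  Adj u w := u ≠ w ∧ ((u = v ∨ w = v) ↔ ¬ G.Adj u w)
  symm := by
    constructor
    intro u w h
    obtain ⟨h1, h2⟩ := h
    refine ⟨h1.symm, ?_⟩
    rw [or_comm, SimpleGraph.adj_comm]
    exact h2
  loopless := ⟨fun u h => h.1 rfl⟩

/-!
A sequence of flips amounts to a Seidel switching with respect to the set of vertices flipped an
odd number of times, and switching changes the number of edges of each triple by an even amount,
so frustration is preserved (and isomorphisms transport it). Conversely, if `G` and `H` on the same
vertices have the same frustrated triangles, fix a vertex `a` and let `S` be the vertices whose
adjacency to `a` differs in `G` and `H`; comparing the triangles `a x y` shows that `G` and `H`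
differ exactly on the pairs with one end in `S`, i.e. `H` is `G` switched at `S`. Pulling `H` back
along the given bijection reduces the theorem to this case.
-/

namespace SimpleGraph

variable {V W : Type*}

theorem frustrated_iff_adj_iff (G : SimpleGraph V) (u v w : V) :
    frustrated G u v w ↔ (G.Adj u v ↔ (G.Adj u w ↔ G.Adj v w)) := by
  classical
  unfold frustrated
  split_ifs <;> simp_all [Nat.odd_iff]

theorem Iso.frustrated_iff {G : SimpleGraph V} {H : SimpleGraph W} (f : G ≃g H)
    (u v w : V) : frustrated H (f u) (f v) (f w) ↔ frustrated G u v w := by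
  simp only [frustrated_iff_adj_iff, f.map_adj_iff]

/-- Seidel switching: toggle every pair with exactly one end in `S`. -/
def switch (G : SimpleGraph V) (S : Set V) : SimpleGraph V where
  Adj u w := u ≠ w ∧ ((u ∈ S ↔ w ∈ S) ↔ G.Adj u w)
  symm := ⟨fun u w h => ⟨h.1.symm, by rw [G.adj_comm]; tauto⟩⟩
  loopless := ⟨fun _ h => h.1 rfl⟩

@[simp]
theorem switch_adj (G : SimpleGraph V) (S : Set V) (u w : V) :
    (G.switch S).Adj u w ↔ u ≠ w ∧ ((u ∈ S ↔ w ∈ S) ↔ G.Adj u w) := Iff.rfl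

theorem switch_empty (G : SimpleGraph V) : G.switch ∅ = G := by
  ext u w
  simpa using G.ne_of_adj

theorem switch_switch (G : SimpleGraph V) (S T : Set V) :
    (G.switch S).switch T = G.switch (symmDiff S T) := by
  ext u w
  simp only [switch_adj, Set.mem_symmDiff]
  tauto

theorem flipVertex_eq_switch (G : SimpleGraph V) (a : V) : flipVertex G a = G.switch {a} := by
  ext u w
  simp only [flipVertex, switch_adj, Set.mem_singleton_iff]
  refine and_congr_right fun huw => ?_
  by_cases hu : u = a <;> by_cases hw : w = a <;> simp_all

-- No distinctness is needed: a triple with a repeated vertex spans an even number of edges.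
theorem frustrated_switch_iff (G : SimpleGraph V) (S : Set V) (u v w : V) :
    frustrated (G.switch S) u v w ↔ frustrated G u v w := by
  simp only [frustrated_iff_adj_iff, switch_adj]
  by_cases huv : u = v <;> by_cases huw : u = w <;> by_cases hvw : v = w <;>
    simp_all [G.adj_comm] <;> tauto

def FlipStep (A B : SimpleGraph V) : Prop := ∃ v, B = flipVertex A v

theorem frustrated_iff_of_reflTransGen_flipStep {G G' : SimpleGraph V}
    (h : Relation.ReflTransGen FlipStep G G') (u v w : V) :
    frustrated G' u v w ↔ frustrated G u v w := by
  induction h with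
  | refl => rfl
  | tail _ hstep ih =>
    obtain ⟨a, rfl⟩ := hstep
    rw [flipVertex_eq_switch, frustrated_switch_iff, ih]

theorem reflTransGen_flipStep_switch (G : SimpleGraph V) {S : Set V} (hS : S.Finite) :
    Relation.ReflTransGen FlipStep G (G.switch S) := by
  induction S, hS using Set.Finite.induction_on with
  | empty => rw [switch_empty]
  | @insert a S ha _ ih =>
    refine ih.tail ⟨a, ?_⟩
    rw [flipVertex_eq_switch, switch_switch, (Set.disjoint_singleton_right.mpr ha).symmDiff_eq_sup]
    ext
    simp

/-- The switching set: fix a vertex `a` and take the vertices whose adjacency to `a` differs in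
`G` and `H`. -/
theorem exists_eq_switch_of_frustrated_iff {G H : SimpleGraph V}
    (h : ∀ u v w, u ≠ v → u ≠ w → v ≠ w → (frustrated G u v w ↔ frustrated H u v w)) :
    ∃ S : Set V, H = G.switch S := by
  rcases isEmpty_or_nonempty V with _ | ⟨⟨a⟩⟩
  · exact ⟨∅, by ext u; exact isEmptyElim u⟩
  refine ⟨{x | ¬(G.Adj a x ↔ H.Adj a x)}, ?_⟩
  ext x y
  simp only [switch_adj, Set.mem_ofPred_eq]
  by_cases hxy : x = y
  · subst hxy; simp
  by_cases hx : x = a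
  · subst hx
    simp only [ne_eq, hxy, not_false_eq_true, SimpleGraph.irrefl, not_true_eq_false, false_iff,
      not_not, true_and]
    tauto
  by_cases hy : y = a
  · subst hy
    simp only [ne_eq, hxy, not_false_eq_true, SimpleGraph.irrefl, not_true_eq_false, iff_false,
      not_not, true_and, G.adj_comm x, H.adj_comm x]
    tauto
  have hxay := h a x y (Ne.symm hx) (Ne.symm hy) hxy
  simp only [frustrated_iff_adj_iff] at hxay
  simp only [ne_eq, hxy, not_false_eq_true, true_and]
  tauto

end SimpleGraph

open SimpleGraph

theorem flip_equivalence_iff_frustration_preserving_bijection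
    (n : ℕ) (G H : SimpleGraph (Fin n)) :
    (∃ G' : SimpleGraph (Fin n),
      Relation.ReflTransGen (fun A B : SimpleGraph (Fin n) => ∃ v : Fin n, B = flipVertex A v)
        G G' ∧ Nonempty (G' ≃g H)) ↔
    ∃ φ : Fin n ≃ Fin n, ∀ u v w : Fin n, u ≠ v → u ≠ w → v ≠ w →
      (frustrated G u v w ↔ frustrated H (φ u) (φ v) (φ w)) := by
  constructor
  · rintro ⟨G', hflips, ⟨f⟩⟩
    exact ⟨f.toEquiv, fun u v w _ _ _ =>
      (frustrated_iff_of_reflTransGen_flipStep hflips u v w).symm.trans (f.frustrated_iff u v w).symm⟩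
  · rintro ⟨φ, hφ⟩
    obtain ⟨S, hS⟩ : ∃ S : Set (Fin n), H.comap φ = G.switch S :=
      exists_eq_switch_of_frustrated_iff fun u v w huv huw hvw =>
        (hφ u v w huv huw hvw).trans ((Iso.comap φ H).frustrated_iff u v w)
    exact ⟨H.comap φ, hS ▸ reflTransGen_flipStep_switch G S.toFinite, ⟨Iso.comap φ H⟩⟩
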